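/- (Ding–Song–Sun inequality, two-spin case) For the two-spin ferromagnetic Ising model with Hamiltonian −βσ_uσ_v − h_uσ_u − h_vσ_v, β ≥ 0, the covariance ⟨σ_u;σ_v⟩^{h} is maximized at h_u = h_v = 0: ⟨σ_u;σ_v⟩^{(h_u,h_v)} ≤ ⟨σ_uσ_v⟩^{(0,0)} = tanh(β), for all real h_u, h_v. -/

import Mathlib

open Finset Real

def spin (b : Bool) : ℝ := if b then 1 else -1

/-- The two-spin Ising measure `μ(σ_u,σ_v) ∝ exp(βσ_uσ_v + h_uσ_u + h_vσ_v)`. -/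
noncomputable def μ2 (β hu hv : ℝ) (σ : Bool × Bool) : ℝ :=
  exp (β * spin σ.1 * spin σ.2 + hu * spin σ.1 + hv * spin σ.2) /
    ∑ σ' : Bool × Bool, exp (β * spin σ'.1 * spin σ'.2 + hu * spin σ'.1 + hv * spin σ'.2)

/-- The covariance `⟨σ_u;σ_v⟩` of the two spins. -/
noncomputable def cov2 (β hu hv : ℝ) : ℝ :=
  (∑ σ : Bool × Bool, spin σ.1 * spin σ.2 * μ2 β hu hv σ) -
    (∑ σ : Bool × Bool, spin σ.1 * μ2 β hu hv σ) *
      (∑ σ : Bool × Bool, spin σ.2 * μ2 β hu hv σ)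

/-!
Summing out the four configurations, the partition function is `2Z` with
`Z = e^β cosh(h_u + h_v) + e^{-β} cosh(h_u - h_v)`, and `cosh² - sinh² = 1` collapses the
covariance to `(e^{2β} - e^{-2β}) / Z²`. The field enters only through `Z`, which is smallest at
zero field, where `Z = e^β + e^{-β}` and the covariance is `tanh β`.
-/

noncomputable def halfPartition (β hu hv : ℝ) : ℝ :=
  exp β * cosh (hu + hv) + exp (-β) * cosh (hu - hv)

lemma halfPartition_pos (β hu hv : ℝ) : 0 < halfPartition β hu hv := by
  unfold halfPartition; positivity

lemma exp_add_exp_neg_le_halfPartition (β hu hv : ℝ) :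
    exp β + exp (-β) ≤ halfPartition β hu hv := by
  unfold halfPartition
  nlinarith [one_le_cosh (hu + hv), one_le_cosh (hu - hv), exp_pos β, exp_pos (-β)]

lemma halfPartition_zero_zero (β : ℝ) : halfPartition β 0 0 = exp β + exp (-β) := by
  simp [halfPartition]

lemma μ2_eq (β hu hv : ℝ) (σ : Bool × Bool) :
    μ2 β hu hv σ = exp (β * spin σ.1 * spin σ.2 + hu * spin σ.1 + hv * spin σ.2) /
      (2 * halfPartition β hu hv) := by
  rw [μ2, halfPartition, cosh_eq, cosh_eq]
  congr 1
  simp only [Fintype.sum_prod_type, Fintype.sum_bool, spin, if_true, Bool.false_eq_true, if_false,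
    mul_one, mul_neg, neg_add, exp_add, exp_neg, exp_sub]
  field_simp
  ring

lemma sum_spin_mul_spin_mul_μ2 (β hu hv : ℝ) :
    ∑ σ : Bool × Bool, spin σ.1 * spin σ.2 * μ2 β hu hv σ =
      (exp β * cosh (hu + hv) - exp (-β) * cosh (hu - hv)) / halfPartition β hu hv := by
  have := halfPartition_pos β hu hv
  simp only [μ2_eq, Fintype.sum_prod_type, Fintype.sum_bool, spin, if_true, Bool.false_eq_true,
    if_false, cosh_eq, mul_one, mul_neg, neg_mul, neg_neg, neg_add, exp_add, exp_neg, exp_sub]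
  field_simp
  ring

lemma sum_spin_fst_mul_μ2 (β hu hv : ℝ) :
    ∑ σ : Bool × Bool, spin σ.1 * μ2 β hu hv σ =
      (exp β * sinh (hu + hv) + exp (-β) * sinh (hu - hv)) / halfPartition β hu hv := by
  have := halfPartition_pos β hu hv
  simp only [μ2_eq, Fintype.sum_prod_type, Fintype.sum_bool, spin, if_true, Bool.false_eq_true,
    if_false, sinh_eq, mul_one, mul_neg, neg_mul, neg_add, exp_add, exp_neg, exp_sub]
  field_simp
  ring

lemma sum_spin_snd_mul_μ2 (β hu hv : ℝ) :
    ∑ σ : Bool × Bool, spin σ.2 * μ2 β hu hv σ =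
      (exp β * sinh (hu + hv) - exp (-β) * sinh (hu - hv)) / halfPartition β hu hv := by
  have := halfPartition_pos β hu hv
  simp only [μ2_eq, Fintype.sum_prod_type, Fintype.sum_bool, spin, if_true, Bool.false_eq_true,
    if_false, sinh_eq, mul_one, mul_neg, neg_mul, neg_add, exp_add, exp_neg, exp_sub]
  field_simp
  ring

lemma cov2_eq (β hu hv : ℝ) :
    cov2 β hu hv = (exp β ^ 2 - exp (-β) ^ 2) / halfPartition β hu hv ^ 2 := by
  have := halfPartition_pos β hu hv
  rw [cov2, sum_spin_mul_spin_mul_μ2, sum_spin_fst_mul_μ2, sum_spin_snd_mul_μ2]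
  field_simp
  unfold halfPartition
  linear_combination
    exp β ^ 2 * cosh_sq_sub_sinh_sq (hu + hv) - exp (-β) ^ 2 * cosh_sq_sub_sinh_sq (hu - hv)

lemma tanh_eq_sq_sub_sq_div (β : ℝ) :
    tanh β = (exp β ^ 2 - exp (-β) ^ 2) / (exp β + exp (-β)) ^ 2 := by
  have : 0 < exp β + exp (-β) := by positivity
  rw [tanh_eq]
  field_simp
  ring

/-- Ding–Song–Sun inequality, two-spin case: the covariance is maximized at zero
field, where it equals `tanh β`. -/
theorem stmt11 (β hu hv : ℝ) (hβ : 0 ≤ β) :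
    cov2 β hu hv ≤ ∑ σ : Bool × Bool, spin σ.1 * spin σ.2 * μ2 β 0 0 σ ∧
    ∑ σ : Bool × Bool, spin σ.1 * spin σ.2 * μ2 β 0 0 σ = tanh β := by
  have hzero : ∑ σ : Bool × Bool, spin σ.1 * spin σ.2 * μ2 β 0 0 σ = tanh β := by
    rw [sum_spin_mul_spin_mul_μ2, halfPartition_zero_zero, tanh_eq]
    simp
  refine ⟨?_, hzero⟩
  have hnum : 0 ≤ exp β ^ 2 - exp (-β) ^ 2 :=
    sub_nonneg.2 (pow_le_pow_left₀ (exp_pos _).le (exp_le_exp.2 (by linarith)) 2)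
  calc cov2 β hu hv = (exp β ^ 2 - exp (-β) ^ 2) / halfPartition β hu hv ^ 2 := cov2_eq β hu hv
    _ ≤ (exp β ^ 2 - exp (-β) ^ 2) / (exp β + exp (-β)) ^ 2 := by
      gcongr
      exact exp_add_exp_neg_le_halfPartition β hu hv
    _ = tanh β := (tanh_eq_sq_sub_sq_div β).symm
    _ = _ := hzero.symm
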